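/- arXiv:1711.00363 — 4 statements merged into one kernel-verified Lean document; each statement's English description precedes it below -/
import Mathlib

section
/- Let K ⊆ ℝ² be a nonempty compact convex set and let x ∈ K be Pareto-optimal in K. Then there exist real weights w₁, w₂ ≥ 0 with w₁ + w₂ = 1 such that w₁x₁ + w₂x₂ ≥ w₁y₁ + w₂y₂ for every y ∈ K. -/
/-- A point `x` of a set `K ⊆ ℝ²` is *Pareto-optimal* in `K` if for every `y ∈ K` and every
coordinate `j`, `y j > x j` implies `y l < x l` for some coordinate `l`. -/
def ParetoPoint (K : Set (Fin 2 → ℝ)) (x : Fin 2 → ℝ) : Prop :=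
  ∀ y ∈ K, ∀ j : Fin 2, y j > x j → ∃ l : Fin 2, y l < x l

/-- If `K ⊆ ℝ²` is a nonempty compact convex set and `x ∈ K` is Pareto-optimal in `K`,
then there are weights `w₁, w₂ ≥ 0` with `w₁ + w₂ = 1` such that `x` maximizes
`w₁ y₁ + w₂ y₂` over `y ∈ K`. -/
theorem pareto_point_exists_weights (K : Set (Fin 2 → ℝ)) (hne : K.Nonempty)
    (hcomp : IsCompact K) (hconv : Convex ℝ K)
    (x : Fin 2 → ℝ) (hx : x ∈ K) (hpar : ParetoPoint K x) :
    ∃ w1 w2 : ℝ, 0 ≤ w1 ∧ 0 ≤ w2 ∧ w1 + w2 = 1 ∧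
      ∀ y ∈ K, w1 * y 0 + w2 * y 1 ≤ w1 * x 0 + w2 * x 1 := by
  classical
  set B : Set (Fin 2 → ℝ) := {y | x 0 < y 0 ∧ x 1 < y 1} with hB
  have hBopen : IsOpen B := by
    have h0 : IsOpen {y : Fin 2 → ℝ | x 0 < y 0} :=
      isOpen_lt continuous_const (continuous_apply 0)
    have h1 : IsOpen {y : Fin 2 → ℝ | x 1 < y 1} :=
      isOpen_lt continuous_const (continuous_apply 1)
    exact h0.inter h1
  have haux : ∀ p a b s t : ℝ, p < a → p < b → 0 ≤ s → 0 ≤ t → s + t = 1 →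
      p < s * a + t * b := by
    intro p a b s t ha hb hs ht hst
    rcases eq_or_lt_of_le hs with hs0 | hs0
    · have : t = 1 := by linarith
      rw [← hs0, this]; linarith
    · have h1 : s * p < s * a := mul_lt_mul_of_pos_left ha hs0
      have h2 : t * p ≤ t * b := mul_le_mul_of_nonneg_left hb.le ht
      have h3 : s * p + t * p = p := by rw [← add_mul, hst, one_mul]
      linarith
  have hBconv : Convex ℝ B := by
    intro a ha b hb s t hs ht hst
    constructor
    · have h1 := ha.1; have h2 := hb.1
      simp only [Pi.add_apply, Pi.smul_apply, smul_eq_mul]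
      exact haux _ _ _ _ _ h1 h2 hs ht hst
    · have h1 := ha.2; have h2 := hb.2
      simp only [Pi.add_apply, Pi.smul_apply, smul_eq_mul]
      exact haux _ _ _ _ _ h1 h2 hs ht hst
  have hdisj : Disjoint B K := by
    rw [Set.disjoint_left]
    intro y hyB hyK
    obtain ⟨l, hl⟩ := hpar y hyK 0 hyB.1
    fin_cases l
    · exact absurd hyB.1 (not_lt.2 hl.le)
    · exact absurd hyB.2 (not_lt.2 hl.le)
  obtain ⟨f, u, hfB, hfK⟩ := geometric_hahn_banach_open hBconv hBopen hconv hdisj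
  set e : Fin 2 → (Fin 2 → ℝ) := fun i => Pi.single i 1 with he
  have hdecomp : ∀ y : Fin 2 → ℝ, y = y 0 • e 0 + y 1 • e 1 := by
    intro y; funext j; fin_cases j <;> simp [he, Pi.single]
  set c0 : ℝ := f (e 0) with hc0
  set c1 : ℝ := f (e 1) with hc1
  have hfval : ∀ y : Fin 2 → ℝ, f y = y 0 * c0 + y 1 * c1 := by
    intro y
    conv_lhs => rw [hdecomp y]
    simp [smul_eq_mul]; rfl
  -- points in B
  have hfb : ∀ s t : ℝ, 0 < s → 0 < t →
      (x 0 + s) * c0 + (x 1 + t) * c1 < u := by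
    intro s t hs ht
    set p : Fin 2 → ℝ := fun i => if i = 0 then x 0 + s else x 1 + t with hp
    have hpB : p ∈ B := by
      constructor <;> simp [hp] <;> linarith
    have := hfB p hpB
    rw [hfval] at this
    simpa [hp] using this
  have hc0le : c0 ≤ 0 := by
    by_contra h
    push_neg at h
    have key := hfb (max 1 ((u - (x 0) * c0 - (x 1 + 1) * c1) / c0)) 1
      (lt_of_lt_of_le one_pos (le_max_left _ _)) one_pos
    have h2 : (u - (x 0) * c0 - (x 1 + 1) * c1) / c0 ≤ max 1 ((u - (x 0) * c0 - (x 1 + 1) * c1) / c0) :=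
      le_max_right _ _
    have h3 : u - (x 0) * c0 - (x 1 + 1) * c1 ≤ max 1 ((u - (x 0) * c0 - (x 1 + 1) * c1) / c0) * c0 := by
      rw [div_le_iff₀ h] at h2; linarith
    nlinarith
  have hc1le : c1 ≤ 0 := by
    by_contra h
    push_neg at h
    have key := hfb 1 (max 1 ((u - (x 1) * c1 - (x 0 + 1) * c0) / c1))
      one_pos (lt_of_lt_of_le one_pos (le_max_left _ _))
    have h2 : (u - (x 1) * c1 - (x 0 + 1) * c0) / c1 ≤ max 1 ((u - (x 1) * c1 - (x 0 + 1) * c0) / c1) :=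
      le_max_right _ _
    have h3 : u - (x 1) * c1 - (x 0 + 1) * c0 ≤ max 1 ((u - (x 1) * c1 - (x 0 + 1) * c0) / c1) * c1 := by
      rw [div_le_iff₀ h] at h2; linarith
    nlinarith
  have hne0 : c0 + c1 < 0 := by
    rcases lt_or_eq_of_le hc0le with h | h
    · linarith
    rcases lt_or_eq_of_le hc1le with h' | h'
    · linarith
    -- both zero: then f x < u and u ≤ f x, contradiction
    exfalso
    have h1 := hfb 1 1 one_pos one_pos
    have h2 := hfK x hx
    rw [hfval] at h2
    nlinarith
  -- f x ≤ u
  have hfxle : x 0 * c0 + x 1 * c1 ≤ u := by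
    by_contra h
    push_neg at h
    set ε : ℝ := (x 0 * c0 + x 1 * c1 - u) / (-(c0 + c1)) with hε
    have hεpos : 0 < ε := div_pos (by linarith) (by linarith)
    have key := hfb ε ε hεpos hεpos
    have : ε * (-(c0 + c1)) = x 0 * c0 + x 1 * c1 - u := by
      rw [hε, div_mul_cancel₀ _ (by linarith : -(c0 + c1) ≠ 0)]
    nlinarith
  set S : ℝ := -(c0 + c1) with hS
  have hSpos : 0 < S := by simp [hS]; linarith
  refine ⟨-c0 / S, -c1 / S, div_nonneg (by linarith) hSpos.le,
    div_nonneg (by linarith) hSpos.le, by rw [← add_div, div_eq_one_iff_eq hSpos.ne']; simp [hS]; ring, ?_⟩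
  intro y hy
  have hfy := hfK y hy
  rw [hfval] at hfy
  have key : y 0 * c0 + y 1 * c1 ≥ x 0 * c0 + x 1 * c1 := le_trans hfxle hfy
  rw [div_mul_eq_mul_div, div_mul_eq_mul_div, ← add_div,
      div_mul_eq_mul_div, div_mul_eq_mul_div, ← add_div,
      div_le_div_iff₀ hSpos hSpos]
  nlinarith
end

section
/- For compatible finite-horizon POMDPs D¹ and D², the achievable set {(E¹[U¹;π], E²[U²;π]) ∈ ℝ² : π a full-memory policy} is a convex and compact subset of ℝ². -/
open Finset

/-- A finitely-supported probability distribution, given as a nonnegative real-valued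
function summing to `1`. -/
def IsDist {α : Type} [Fintype α] (p : α → ℝ) : Prop :=
  (∀ x, 0 ≤ p x) ∧ ∑ x, p x = 1

/-- A finite-horizon POMDP with states `S`, actions `A`, observations `O` and horizon `n`:
an initial distribution `μ`, transition probabilities `T s a s'` = P(s'|s,a),
observation probabilities `Ω s o` = P(o|s), and a utility function `U` on state
trajectories (not assumed additive over time). -/
structure POMDP (S A O : Type) (n : ℕ) where
  μ : S → ℝ
  T : S → A → S → ℝ
  Ω : S → O → ℝ
  U : (Fin n → S) → ℝ

/-- The probabilistic data of a POMDP consists of genuine probability distributions. -/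
def POMDP.Valid {S A O : Type} {n : ℕ} [Fintype S] [Fintype O] (D : POMDP S A O n) : Prop :=
  IsDist D.μ ∧ (∀ s a, IsDist (D.T s a)) ∧ ∀ s, IsDist (D.Ω s)

/-- A history at (0-indexed) time `i`: observations `o₀, …, o_i` and actions `a₀, …, a_{i-1}`. -/
def Hist (O A : Type) (i : ℕ) : Type := (Fin (i + 1) → O) × (Fin i → A)

/-- A full-memory policy: at each time `i` it assigns to every history a distribution
on actions (given as a real-valued function). -/
def Policy (O A : Type) (n : ℕ) : Type := ∀ i : Fin n, Hist O A i.val → A → ℝ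

/-- A full-memory policy is a genuine policy if every action "distribution" it outputs is
a probability distribution. -/
def IsPolicy {O A : Type} {n : ℕ} [Fintype A] (π : Policy O A n) : Prop :=
  ∀ (i : Fin n) (h : Hist O A i.val), IsDist (π i h)

/-- The history at time `i` extracted from full observation and action sequences. -/
def histOf {O A : Type} {n : ℕ} (o : Fin n → O) (a : Fin n → A) (i : Fin n) :
    Hist O A i.val :=
  (fun k => o ⟨k.val, by have := k.isLt; have := i.isLt; omega⟩,
   fun k => a ⟨k.val, by have := k.isLt; have := i.isLt; omega⟩)

/-- The probability `P(s̄, ō, ā; π)` of a full trajectory under policy `π`: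
`μ(s₁) ∏ᵢ Ω(oᵢ|sᵢ) πᵢ(aᵢ|hᵢ) ∏ᵢ T(sᵢ₊₁|sᵢ,aᵢ)`. -/
noncomputable def trajProb {S A O : Type} {n : ℕ} [NeZero n] (D : POMDP S A O n)
    (π : Policy O A n) (s : Fin n → S) (o : Fin n → O) (a : Fin n → A) : ℝ :=
  D.μ (s 0) *
    (∏ i : Fin n, D.Ω (s i) (o i) * π i (histOf o a i) (a i)) *
    ∏ i : Fin (n - 1),
      D.T (s ⟨i.val, by have := i.isLt; omega⟩) (a ⟨i.val, by have := i.isLt; omega⟩)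
        (s ⟨i.val + 1, by have := i.isLt; omega⟩)

/-- The expected utility `E[U; π]` of a policy `π` in the POMDP `D`. -/
noncomputable def expUtil {S A O : Type} {n : ℕ} [Fintype S] [Fintype A] [Fintype O]
    [NeZero n] (D : POMDP S A O n) (π : Policy O A n) : ℝ :=
  ∑ s : Fin n → S, ∑ o : Fin n → O, ∑ a : Fin n → A, trajProb D π s o a * D.U s

/-- A full-memory policy `π` is Pareto-optimal for the pair `(D1, D2)` of compatible POMDPs
if no other policy can improve one principal's expected utility without strictly
decreasing the other's. -/
def ParetoOptimal {S1 S2 A O : Type} {n : ℕ} [Fintype S1] [Fintype S2] [Fintype A]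
    [Fintype O] [NeZero n] (D1 : POMDP S1 A O n) (D2 : POMDP S2 A O n)
    (π : Policy O A n) : Prop :=
  ∀ π' : Policy O A n, IsPolicy π' →
    (expUtil D1 π' > expUtil D1 π → expUtil D1 π' < expUtil D1 π ∨ expUtil D2 π' < expUtil D2 π) ∧
    (expUtil D2 π' > expUtil D2 π → expUtil D1 π' < expUtil D1 π ∨ expUtil D2 π' < expUtil D2 π)

/-- The mixture POMDP `w1 • D1 + w2 • D2`: flip a `(w1, w2)`-weighted coin `B ∈ {1,2}`,
then run `D^B` forever after.  Its states are pairs `(j, s)` (encoded as `S1 ⊕ S2`),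
the coin's value never changes, and the utility of a trajectory whose component is
constantly `j` is `U^j` of its `S^j`-components. -/
noncomputable def POMDP.mix {S1 S2 A O : Type} {n : ℕ} [Nonempty S1] [Nonempty S2] [NeZero n]
    (w1 w2 : ℝ) (D1 : POMDP S1 A O n) (D2 : POMDP S2 A O n) : POMDP (S1 ⊕ S2) A O n where
  μ := fun js => match js with
    | .inl s => w1 * D1.μ s
    | .inr s => w2 * D2.μ s
  T := fun js a js' => match js, js' with
    | .inl s, .inl s' => D1.T s a s'
    | .inr s, .inr s' => D2.T s a s'
    | .inl _, .inr _ => 0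
    | .inr _, .inl _ => 0
  Ω := fun js o => match js with
    | .inl s => D1.Ω s o
    | .inr s => D2.Ω s o
  U := fun sb => match sb 0 with
    | .inl _ => D1.U fun i => match sb i with
        | .inl s => s
        | .inr _ => Classical.arbitrary S1
    | .inr _ => D2.U fun i => match sb i with
        | .inr s => s
        | .inl _ => Classical.arbitrary S2

/-- `P(o_{≤i} | Do(a_{<i}))`: the probability of the observations in the history `h`,
causally conditioned on its actions. -/
noncomputable def doProb {S A O : Type} {n : ℕ} [Fintype S] (D : POMDP S A O n)
    (i : Fin n) (h : Hist O A i.val) : ℝ :=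
  ∑ s : Fin (i.val + 1) → S,
    D.μ (s 0) * (∏ k : Fin (i.val + 1), D.Ω (s k) (h.1 k)) *
      ∏ k : Fin i.val, D.T (s k.castSucc) (h.2 k) (s k.succ)

/-- `(o, a)` extends the history `h` at time `i` if they agree with its recorded
observations and actions. -/
def ExtendsHist {O A : Type} {n : ℕ} (i : Fin n) (h : Hist O A i.val)
    (o : Fin n → O) (a : Fin n → A) : Prop :=
  (∀ k : Fin (i.val + 1), o ⟨k.val, by have := k.isLt; have := i.isLt; omega⟩ = h.1 k) ∧
  (∀ k : Fin i.val, a ⟨k.val, by have := k.isLt; have := i.isLt; omega⟩ = h.2 k)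

instance {O A : Type} {n : ℕ} [DecidableEq O] [DecidableEq A] (i : Fin n)
    (h : Hist O A i.val) (o : Fin n → O) (a : Fin n → A) :
    Decidable (ExtendsHist i h o a) := by
  unfold ExtendsHist; infer_instance

/-- The do-weighted value `W_D^π(α, hᵢ)`: the sum over all trajectories extending the
history `hᵢ` of `μ(s₁) ⬝ ∏_{k≤i} Ω(o_k|s_k) ⬝ α(aᵢ) ⬝ ∏_{k>i} Ω(o_k|s_k) π_k(a_k|h_k) ⬝
∏_k T(s_{k+1}|s_k,a_k) ⬝ U(s̄)`; it equals `P(o_{≤i}|Do(a_{<i}))` times the conditional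
expected utility given `hᵢ` when `aᵢ ∼ α` and later actions follow `π`. -/
noncomputable def doVal {S A O : Type} {n : ℕ} [Fintype S] [Fintype A] [Fintype O]
    [DecidableEq O] [DecidableEq A] [NeZero n] (D : POMDP S A O n) (π : Policy O A n)
    (i : Fin n) (h : Hist O A i.val) (α : A → ℝ) : ℝ :=
  ∑ s : Fin n → S, ∑ o : Fin n → O, ∑ a : Fin n → A,
    if ExtendsHist i h o a then
      D.μ (s 0) *
        (∏ k : Fin (i.val + 1),
          D.Ω (s ⟨k.val, by have := k.isLt; have := i.isLt; omega⟩)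
            (o ⟨k.val, by have := k.isLt; have := i.isLt; omega⟩)) *
        α (a i) *
        (∏ k ∈ univ.filter (fun k : Fin n => i < k), D.Ω (s k) (o k) * π k (histOf o a k) (a k)) *
        (∏ k : Fin (n - 1),
          D.T (s ⟨k.val, by have := k.isLt; omega⟩) (a ⟨k.val, by have := k.isLt; omega⟩)
            (s ⟨k.val + 1, by have := k.isLt; omega⟩)) *
        D.U s
    else 0

/-- The truncation of a history at time `i` to the (earlier) time `k < i`. -/
def truncHist {O A : Type} {n : ℕ} (i : Fin n) (h : Hist O A i.val) (k : Fin i.val) :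
    Hist O A k.val :=
  (fun m => h.1 ⟨m.val, by have := m.isLt; have := k.isLt; omega⟩,
   fun m => h.2 ⟨m.val, by have := m.isLt; have := k.isLt; omega⟩)

/-- `P(hᵢ; π)`: the probability of the history `hᵢ` under the policy `π` in `D`. -/
noncomputable def histProb {S A O : Type} {n : ℕ} [Fintype S] (D : POMDP S A O n)
    (π : Policy O A n) (i : Fin n) (h : Hist O A i.val) : ℝ :=
  ∑ s : Fin (i.val + 1) → S,
    D.μ (s 0) * (∏ k : Fin (i.val + 1), D.Ω (s k) (h.1 k)) *
      (∏ k : Fin i.val,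
        π ⟨k.val, by have := k.isLt; have := i.isLt; omega⟩ (truncHist i h k) (h.2 k)) *
      ∏ k : Fin i.val, D.T (s k.castSucc) (h.2 k) (s k.succ)


section Aux

/-- Product of the policy's probabilities along a history. -/
noncomputable def polWeight {O A : Type} {n : ℕ} (π : Policy O A n) (i : Fin n)
    (h : Hist O A i.val) : ℝ :=
  ∏ k : Fin i.val, π ⟨k.val, by have := k.isLt; have := i.isLt; omega⟩ (truncHist i h k) (h.2 k)

/-- The Kuhn mixture of two full-memory policies with weight `t`. -/
noncomputable def mixPol {O A : Type} {n : ℕ} [Fintype A] (t : ℝ) (π π' : Policy O A n) :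
    Policy O A n := fun i h a =>
  if t * polWeight π i h + (1 - t) * polWeight π' i h = 0 then (Fintype.card A : ℝ)⁻¹
  else (t * polWeight π i h * π i h a + (1 - t) * polWeight π' i h * π' i h a) /
    (t * polWeight π i h + (1 - t) * polWeight π' i h)

lemma polWeight_nonneg {O A : Type} {n : ℕ} [Fintype A] {π : Policy O A n} (hπ : IsPolicy π)
    (i : Fin n) (h : Hist O A i.val) : 0 ≤ polWeight π i h :=
  Finset.prod_nonneg fun k _ => (hπ _ _).1 _

lemma mixPol_isPolicy {O A : Type} {n : ℕ} [Fintype A] [Nonempty A] {t : ℝ}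
    (ht0 : 0 ≤ t) (ht1 : t ≤ 1) {π π' : Policy O A n}
    (hπ : IsPolicy π) (hπ' : IsPolicy π') : IsPolicy (mixPol t π π') := by
  intro i h
  have hW : 0 ≤ polWeight π i h := polWeight_nonneg hπ i h
  have hW' : 0 ≤ polWeight π' i h := polWeight_nonneg hπ' i h
  have hN : 0 ≤ t * polWeight π i h + (1 - t) * polWeight π' i h :=
    add_nonneg (mul_nonneg ht0 hW) (mul_nonneg (by linarith) hW')
  constructor
  · intro a
    unfold mixPol
    split
    · positivity
    · exact div_nonneg (add_nonneg (mul_nonneg (mul_nonneg ht0 hW) ((hπ i h).1 a))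
        (mul_nonneg (mul_nonneg (by linarith) hW') ((hπ' i h).1 a))) hN
  · unfold mixPol
    split
    · rw [Finset.sum_const, Finset.card_univ, nsmul_eq_mul]
      rw [mul_inv_cancel₀]
      exact_mod_cast Fintype.card_ne_zero
    · rename_i hz
      rw [← Finset.sum_div]
      rw [div_eq_one_iff_eq hz]
      rw [Finset.sum_add_distrib, ← Finset.mul_sum, ← Finset.mul_sum,
        (hπ i h).2, (hπ' i h).2, mul_one, mul_one]

open Finset in
lemma telescope {f g m : ℕ → ℝ} {t : ℝ} (ht : 0 < t) (ht1 : t < 1)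
    (hf : ∀ i, 0 ≤ f i) (hg : ∀ i, 0 ≤ g i) (N : ℕ)
    (hm : ∀ i < N, t * ∏ k ∈ range i, f k + (1 - t) * ∏ k ∈ range i, g k ≠ 0 →
      m i * (t * ∏ k ∈ range i, f k + (1 - t) * ∏ k ∈ range i, g k) =
        t * ∏ k ∈ range (i + 1), f k + (1 - t) * ∏ k ∈ range (i + 1), g k) :
    ∏ k ∈ range N, m k = t * ∏ k ∈ range N, f k + (1 - t) * ∏ k ∈ range N, g k := by
  induction N with
  | zero => simp
  | succ N ih =>
    have ih' := ih (fun i hi => hm i (by omega))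
    rw [prod_range_succ, ih']
    by_cases hz : t * ∏ k ∈ range N, f k + (1 - t) * ∏ k ∈ range N, g k = 0
    · have h1 : 0 ≤ t * ∏ k ∈ range N, f k :=
        mul_nonneg ht.le (prod_nonneg fun i _ => hf i)
      have h2 : 0 ≤ (1 - t) * ∏ k ∈ range N, g k :=
        mul_nonneg (by linarith) (prod_nonneg fun i _ => hg i)
      have hb := (add_eq_zero_iff_of_nonneg h1 h2).mp hz
      have hfz : ∏ k ∈ range N, f k = 0 := by
        rcases mul_eq_zero.mp hb.1 with h | h
        · exact absurd h ht.ne'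
        · exact h
      have hgz : ∏ k ∈ range N, g k = 0 := by
        rcases mul_eq_zero.mp hb.2 with h | h
        · nlinarith
        · exact h
      rw [hz, prod_range_succ, prod_range_succ, hfz, hgz]; ring
    · rw [mul_comm]; exact hm N (Nat.lt_succ_self N) hz

/-- Extension of a per-trajectory policy product to all of `ℕ`. -/
noncomputable def polExt {O A : Type} {n : ℕ} (π : Policy O A n) (o : Fin n → O)
    (a : Fin n → A) (k : ℕ) : ℝ :=
  if h : k < n then π ⟨k, h⟩ (histOf o a ⟨k, h⟩) (a ⟨k, h⟩) else 1

open Finset in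
lemma polWeight_histOf {O A : Type} {n : ℕ} (π : Policy O A n) (o : Fin n → O)
    (a : Fin n → A) (i : Fin n) :
    polWeight π i (histOf o a i) = ∏ k ∈ range i.val, polExt π o a k := by
  rw [← Fin.prod_univ_eq_prod_range (fun k => polExt π o a k) i.val]
  unfold polWeight
  apply Finset.prod_congr rfl
  intro k _
  have hk : (k : ℕ) < n := by have := k.isLt; have := i.isLt; omega
  rw [polExt, dif_pos hk]
  rfl

open Finset in
lemma prod_polExt {O A : Type} {n : ℕ} (π : Policy O A n) (o : Fin n → O) (a : Fin n → A) :
    ∏ i : Fin n, π i (histOf o a i) (a i) = ∏ k ∈ range n, polExt π o a k := by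
  rw [← Fin.prod_univ_eq_prod_range (fun k => polExt π o a k) n]
  apply Finset.prod_congr rfl
  intro k _
  rw [polExt, dif_pos k.isLt]

lemma polExt_nonneg {O A : Type} {n : ℕ} [Fintype A] {π : Policy O A n} (hπ : IsPolicy π)
    (o : Fin n → O) (a : Fin n → A) (k : ℕ) : 0 ≤ polExt π o a k := by
  unfold polExt; split
  · exact (hπ _ _).1 _
  · exact zero_le_one

open Finset in
lemma mixPol_prod {O A : Type} {n : ℕ} [Fintype A] {t : ℝ} (ht0 : 0 < t) (ht1 : t < 1)
    {π π' : Policy O A n} (hπ : IsPolicy π) (hπ' : IsPolicy π')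
    (o : Fin n → O) (a : Fin n → A) :
    ∏ i : Fin n, mixPol t π π' i (histOf o a i) (a i) =
      t * ∏ i : Fin n, π i (histOf o a i) (a i) +
        (1 - t) * ∏ i : Fin n, π' i (histOf o a i) (a i) := by
  rw [prod_polExt, prod_polExt, prod_polExt]
  apply telescope ht0 ht1 (polExt_nonneg hπ o a) (polExt_nonneg hπ' o a)
  intro i hi hz
  rw [polExt, dif_pos hi]
  have hW : polWeight π ⟨i, hi⟩ (histOf o a ⟨i, hi⟩) = ∏ k ∈ range i, polExt π o a k :=
    polWeight_histOf π o a ⟨i, hi⟩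
  have hW' : polWeight π' ⟨i, hi⟩ (histOf o a ⟨i, hi⟩) = ∏ k ∈ range i, polExt π' o a k :=
    polWeight_histOf π' o a ⟨i, hi⟩
  rw [mixPol, hW, hW', if_neg hz, div_mul_cancel₀ _ hz]
  rw [prod_range_succ, prod_range_succ, polExt, dif_pos hi, polExt, dif_pos hi]
  ring

open Finset in
lemma trajProb_mixPol {S A O : Type} {n : ℕ} [NeZero n] [Fintype A] (D : POMDP S A O n)
    {t : ℝ} (ht0 : 0 < t) (ht1 : t < 1) {π π' : Policy O A n}
    (hπ : IsPolicy π) (hπ' : IsPolicy π') (s : Fin n → S) (o : Fin n → O) (a : Fin n → A) :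
    trajProb D (mixPol t π π') s o a =
      t * trajProb D π s o a + (1 - t) * trajProb D π' s o a := by
  unfold trajProb
  rw [prod_mul_distrib, prod_mul_distrib, prod_mul_distrib, mixPol_prod ht0 ht1 hπ hπ' o a]
  ring

lemma expUtil_mixPol {S A O : Type} {n : ℕ} [Fintype S] [Fintype A] [Fintype O] [NeZero n]
    (D : POMDP S A O n) {t : ℝ} (ht0 : 0 < t) (ht1 : t < 1) {π π' : Policy O A n}
    (hπ : IsPolicy π) (hπ' : IsPolicy π') :
    expUtil D (mixPol t π π') = t * expUtil D π + (1 - t) * expUtil D π' := by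
  unfold expUtil
  simp only [trajProb_mixPol D ht0 ht1 hπ hπ', add_mul, Finset.sum_add_distrib,
    Finset.mul_sum, mul_assoc]

instance {O A : Type} [Fintype O] [Fintype A] (i : ℕ) : Fintype (Hist O A i) := by
  unfold Hist; infer_instance

instance {O A : Type} {n : ℕ} : TopologicalSpace (Policy O A n) :=
  inferInstanceAs (TopologicalSpace (∀ i : Fin n, Hist O A i.val → A → ℝ))

lemma continuous_expUtil {S A O : Type} {n : ℕ} [Fintype S] [Fintype A] [Fintype O]
    [NeZero n] (D : POMDP S A O n) : Continuous fun π : Policy O A n => expUtil D π := by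
  unfold expUtil trajProb
  apply continuous_finset_sum; intro s _
  apply continuous_finset_sum; intro o _
  apply continuous_finset_sum; intro a _
  apply Continuous.mul _ continuous_const
  apply Continuous.mul _ continuous_const
  apply Continuous.mul continuous_const
  apply continuous_finset_prod; intro i _
  exact continuous_const.mul ((continuous_apply (a i)).comp
    ((continuous_apply (histOf o a i)).comp (continuous_apply i)))

lemma isCompact_isPolicy {O A : Type} {n : ℕ} [Fintype O] [Fintype A] :
    IsCompact {π : Policy O A n | IsPolicy π} := by
  apply IsCompact.of_isClosed_subset
    (isCompact_univ_pi fun i : Fin n => isCompact_univ_pi fun h : Hist O A i.val =>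
      isCompact_univ_pi fun a : A => isCompact_Icc (a := (0:ℝ)) (b := 1))
  · have : {π : Policy O A n | IsPolicy π} =
        ⋂ i : Fin n, ⋂ h : Hist O A i.val,
          ((⋂ a : A, {π : Policy O A n | 0 ≤ π i h a}) ∩
            {π : Policy O A n | ∑ a, π i h a = 1}) := by
      ext π
      simp only [Set.mem_setOf_eq, Set.mem_iInter, Set.mem_inter_iff, IsPolicy, IsDist]
    rw [this]
    apply isClosed_iInter; intro i
    apply isClosed_iInter; intro h
    apply IsClosed.inter
    · apply isClosed_iInter; intro a
      exact isClosed_le continuous_const ((continuous_apply a).comp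
        ((continuous_apply h).comp (continuous_apply i)))
    · exact isClosed_eq (continuous_finset_sum _ fun a _ =>
        (continuous_apply a).comp ((continuous_apply h).comp (continuous_apply i)))
        continuous_const
  · intro π hπ
    simp only [Set.mem_univ_pi]
    intro i h a
    refine ⟨(hπ i h).1 a, ?_⟩
    calc π i h a ≤ ∑ b, π i h b :=
          Finset.single_le_sum (fun b _ => (hπ i h).1 b) (Finset.mem_univ a)
      _ = 1 := (hπ i h).2

end Aux

/-- For compatible finite-horizon POMDPs `D1`, `D2`, the achievable set
`{(E¹[U¹;π], E²[U²;π]) : π a full-memory policy} ⊆ ℝ²` is convex and compact. -/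
theorem achievable_set_convex_isCompact
    {S1 S2 A O : Type} [Fintype S1] [Fintype S2] [Fintype A] [Fintype O]
    [Nonempty S1] [Nonempty S2] [Nonempty A] [Nonempty O] {n : ℕ} [NeZero n]
    (D1 : POMDP S1 A O n) (D2 : POMDP S2 A O n) (hD1 : D1.Valid) (hD2 : D2.Valid) :
    Convex ℝ {p : ℝ × ℝ | ∃ π : Policy O A n,
        IsPolicy π ∧ p = (expUtil D1 π, expUtil D2 π)} ∧
    IsCompact {p : ℝ × ℝ | ∃ π : Policy O A n,
        IsPolicy π ∧ p = (expUtil D1 π, expUtil D2 π)} := by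
  have hconv : Convex ℝ {p : ℝ × ℝ | ∃ π : Policy O A n,
      IsPolicy π ∧ p = (expUtil D1 π, expUtil D2 π)} := by
    rintro p ⟨π, hπ, rfl⟩ q ⟨π', hπ', rfl⟩ tA tB htA htB htAB
    rcases eq_or_lt_of_le htA with h0 | h0
    · refine ⟨π', hπ', ?_⟩
      have : tB = 1 := by linarith
      simp [← h0, this]
    rcases eq_or_lt_of_le htB with h1 | h1
    · refine ⟨π, hπ, ?_⟩
      have : tA = 1 := by linarith
      simp [← h1, this]
    have htA1 : tA < 1 := by linarith
    have htB' : tB = 1 - tA := by linarith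
    refine ⟨mixPol tA π π', mixPol_isPolicy htA (le_of_lt htA1) hπ hπ', ?_⟩
    rw [expUtil_mixPol D1 h0 htA1 hπ hπ', expUtil_mixPol D2 h0 htA1 hπ hπ']
    simp [Prod.ext_iff, htB']
  refine ⟨hconv, ?_⟩
  have himg : {p : ℝ × ℝ | ∃ π : Policy O A n,
      IsPolicy π ∧ p = (expUtil D1 π, expUtil D2 π)} =
      (fun π : Policy O A n => (expUtil D1 π, expUtil D2 π)) '' {π | IsPolicy π} := by
    ext p
    simp only [Set.mem_image, Set.mem_setOf_eq]
    constructor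
    · rintro ⟨π, hπ, rfl⟩; exact ⟨π, hπ, rfl⟩
    · rintro ⟨π, hπ, rfl⟩; exact ⟨π, hπ, rfl⟩
  rw [himg]
  exact isCompact_isPolicy.image ((continuous_expUtil D1).prodMk (continuous_expUtil D2))
end

section
/- (Pareto-optimal control theorem, necessity.) Let D¹, D² be compatible finite-horizon POMDPs and let π be a full-memory policy that is Pareto-optimal for (D¹,D²). Then there exist weights w¹, w² ≥ 0 with w¹ + w² = 1 such that for every time i and every history hᵢ with w¹·P¹(hᵢ;π) + w²·P²(hᵢ;π) > 0, the distribution πᵢ(−|hᵢ) maximizes α ↦ w¹·W_{D¹}^π(α,hᵢ) + w²·W_{D²}^π(α,hᵢ) over all α ∈ Δ(A). -/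
open Finset

section ParetoHelpers
set_option linter.unusedVariables false
set_option linter.unusedSectionVars false
set_option maxHeartbeats 1000000

open Finset

variable {S A O : Type} {n : ℕ}

instance histDecEq [DecidableEq O] [DecidableEq A] (i : ℕ) : DecidableEq (Hist O A i) := by
  unfold Hist; infer_instance

instance histFintype [Fintype O] [Fintype A] (i : ℕ) : Fintype (Hist O A i) := by
  unfold Hist; infer_instance

/-- point mass distribution on `b` -/
def pmass [DecidableEq A] (b : A) : A → ℝ := fun a => if a = b then 1 else 0

lemma pmass_nonneg [DecidableEq A] (b a : A) : 0 ≤ pmass b a := by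
  unfold pmass; split <;> norm_num

lemma pmass_sum [DecidableEq A] [Fintype A] (b : A) : ∑ a : A, pmass b a = 1 := by
  unfold pmass
  rw [Finset.sum_ite_eq' univ b (fun _ => (1:ℝ))]
  simp

/-- update a policy at a single time/history -/
def upd [DecidableEq O] [DecidableEq A] (π : Policy O A n) (i : Fin n) (h : Hist O A i.val)
    (α : A → ℝ) : Policy O A n :=
  fun j h' => if (⟨j, h'⟩ : (k : Fin n) × Hist O A k.val) = ⟨i, h⟩ then α else π j h'

lemma upd_same [DecidableEq O] [DecidableEq A] (π : Policy O A n) (i : Fin n)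
    (h : Hist O A i.val) (α : A → ℝ) : upd π i h α i h = α := if_pos rfl

lemma upd_of_ne [DecidableEq O] [DecidableEq A] (π : Policy O A n) (i : Fin n)
    (h : Hist O A i.val) (α : A → ℝ) (j : Fin n) (h' : Hist O A j.val)
    (hne : (⟨j, h'⟩ : (k : Fin n) × Hist O A k.val) ≠ ⟨i, h⟩) :
    upd π i h α j h' = π j h' := if_neg hne

lemma upd_self [DecidableEq O] [DecidableEq A] (π : Policy O A n) (i : Fin n)
    (h : Hist O A i.val) : upd π i h (π i h) = π := by
  funext j h'
  unfold upd
  by_cases hc : (⟨j, h'⟩ : (k : Fin n) × Hist O A k.val) = ⟨i, h⟩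
  · rw [if_pos hc]
    cases hc
    rfl
  · rw [if_neg hc]

lemma isPolicy_upd [DecidableEq O] [DecidableEq A] [Fintype A] (π : Policy O A n) (i : Fin n)
    (h : Hist O A i.val) (α : A → ℝ) (hπ : IsPolicy π) (hα : IsDist α) :
    IsPolicy (upd π i h α) := by
  intro j h'
  unfold upd
  by_cases hc : (⟨j, h'⟩ : (k : Fin n) × Hist O A k.val) = ⟨i, h⟩
  · rw [if_pos hc]; exact hα
  · rw [if_neg hc]; exact hπ j h'

lemma isDist_shift [Fintype A] [DecidableEq A] (x : A → ℝ) (hx : IsDist x) (c : ℝ)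
    (hc0 : 0 ≤ c) (hc1 : c ≤ 1) (b0 : A) :
    IsDist (fun b => x b + c * (pmass b0 b - x b)) := by
  constructor
  · intro b
    have h1 := pmass_nonneg b0 b
    have h2 := hx.1 b
    show 0 ≤ x b + c * (pmass b0 b - x b)
    nlinarith [mul_nonneg hc0 h1, mul_nonneg (by linarith : (0:ℝ) ≤ 1 - c) h2]
  · rw [Finset.sum_add_distrib, ← Finset.mul_sum, Finset.sum_sub_distrib, hx.2, pmass_sum]
    ring

lemma isDist_shift2 [Fintype A] [DecidableEq A] (x : A → ℝ) (hx : IsDist x) (c0 c1 : ℝ)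
    (hc0 : 0 ≤ c0) (hc1 : 0 ≤ c1) (hcs : c0 + c1 ≤ 1) (b0 b1 : A) :
    IsDist (fun b => x b + c0 * (pmass b0 b - x b) + c1 * (pmass b1 b - x b)) := by
  constructor
  · intro b
    have h1 := pmass_nonneg b0 b
    have h2 := pmass_nonneg b1 b
    have h3 := hx.1 b
    show 0 ≤ x b + c0 * (pmass b0 b - x b) + c1 * (pmass b1 b - x b)
    nlinarith [mul_nonneg hc0 h1, mul_nonneg hc1 h2,
      mul_nonneg (by linarith : (0:ℝ) ≤ 1 - c0 - c1) h3]
  · rw [Finset.sum_add_distrib, Finset.sum_add_distrib, ← Finset.mul_sum, ← Finset.mul_sum,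
      Finset.sum_sub_distrib, Finset.sum_sub_distrib, hx.2, pmass_sum, pmass_sum]
    ring

/-- the product of the policy's probabilities of the actions along a history -/
noncomputable def polC (π : Policy O A n) (i : Fin n) (h : Hist O A i.val) : ℝ :=
  ∏ k : Fin i.val,
    π ⟨k.val, by have := k.isLt; have := i.isLt; omega⟩ (truncHist i h k) (h.2 k)

lemma polC_nonneg [Fintype A] (π : Policy O A n) (hπ : IsPolicy π) (i : Fin n)
    (h : Hist O A i.val) : 0 ≤ polC π i h :=
  Finset.prod_nonneg fun k _ => (hπ _ _).1 _

/-- trajectory probability with the time-`i` policy factor skipped -/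
noncomputable def skipProb [NeZero n] (D : POMDP S A O n) (π : Policy O A n) (i : Fin n)
    (s : Fin n → S) (o : Fin n → O) (a : Fin n → A) : ℝ :=
  D.μ (s 0) *
    (∏ k : Fin n, D.Ω (s k) (o k) * (if k = i then 1 else π k (histOf o a k) (a k))) *
    ∏ k : Fin (n - 1),
      D.T (s ⟨k.val, by have := k.isLt; omega⟩) (a ⟨k.val, by have := k.isLt; omega⟩)
        (s ⟨k.val + 1, by have := k.isLt; omega⟩)

lemma extendsHist_iff {i : Fin n} {h : Hist O A i.val} {o : Fin n → O} {a : Fin n → A} :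
    ExtendsHist i h o a ↔ histOf o a i = h := by
  constructor
  · rintro ⟨h1, h2⟩
    unfold histOf
    exact Prod.ext (funext fun k => h1 k) (funext fun k => h2 k)
  · intro he
    subst he
    exact ⟨fun k => rfl, fun k => rfl⟩

lemma histOf_trunc {i : Fin n} {h : Hist O A i.val} {o : Fin n → O} {a : Fin n → A}
    (hext : ExtendsHist i h o a) (k : Fin n) (hk : k.val < i.val) :
    histOf o a k = truncHist i h ⟨k.val, hk⟩ := by
  unfold histOf truncHist
  refine Prod.ext (funext fun m => ?_) (funext fun m => ?_)
  · exact hext.1 ⟨m.val, by have := m.isLt; omega⟩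
  · exact hext.2 ⟨m.val, by have := m.isLt; omega⟩

variable [Fintype S] [Fintype A] [Fintype O] [DecidableEq O] [DecidableEq A] [NeZero n]

omit [Fintype S] [Fintype A] [Fintype O] in
lemma skip_mul (D : POMDP S A O n) (π : Policy O A n) (i : Fin n)
    (s : Fin n → S) (o : Fin n → O) (a : Fin n → A) :
    trajProb D π s o a = π i (histOf o a i) (a i) * skipProb D π i s o a := by
  unfold trajProb skipProb
  rw [← Finset.prod_erase_mul univ
      (fun k : Fin n => D.Ω (s k) (o k) * π k (histOf o a k) (a k)) (mem_univ i),
    ← Finset.prod_erase_mul univ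
      (fun k : Fin n => D.Ω (s k) (o k) * (if k = i then 1 else π k (histOf o a k) (a k)))
      (mem_univ i)]
  have he : (∏ k ∈ univ.erase i,
        (D.Ω (s k) (o k) * (if k = i then 1 else π k (histOf o a k) (a k))))
      = ∏ k ∈ univ.erase i, (D.Ω (s k) (o k) * π k (histOf o a k) (a k)) :=
    Finset.prod_congr rfl fun k hk => by rw [if_neg (Finset.ne_of_mem_erase hk)]
  rw [he, if_pos rfl]
  ring

omit [Fintype S] [Fintype A] [Fintype O] in
lemma skipProb_upd (D : POMDP S A O n) (π : Policy O A n) (i : Fin n) (h : Hist O A i.val)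
    (α : A → ℝ) (s : Fin n → S) (o : Fin n → O) (a : Fin n → A) :
    skipProb D (upd π i h α) i s o a = skipProb D π i s o a := by
  unfold skipProb
  congr 1
  congr 1
  apply Finset.prod_congr rfl
  intro k _
  by_cases hk : k = i
  · rw [if_pos hk, if_pos hk]
  · rw [if_neg hk, if_neg hk]
    congr 1
    exact congrFun (upd_of_ne π i h α k _ (fun hcon => hk (congrArg Sigma.fst hcon))) (a k)

omit [Fintype S] [Fintype A] [Fintype O] in
lemma trajProb_upd (D : POMDP S A O n) (π : Policy O A n) (i : Fin n) (h : Hist O A i.val)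
    (α : A → ℝ) (s : Fin n → S) (o : Fin n → O) (a : Fin n → A) :
    trajProb D (upd π i h α) s o a =
      if histOf o a i = h then α (a i) * skipProb D π i s o a else trajProb D π s o a := by
  by_cases hext : histOf o a i = h
  · rw [if_pos hext, skip_mul D (upd π i h α) i s o a, skipProb_upd]
    congr 1
    rw [hext]
    exact congrFun (upd_same π i h α) (a i)
  · rw [if_neg hext]
    unfold trajProb
    congr 1
    congr 1
    apply Finset.prod_congr rfl
    intro k _
    congr 1
    by_cases hk : k = i
    · subst hk
      have hne2 : (⟨k, histOf o a k⟩ : (m : Fin n) × Hist O A m.val) ≠ ⟨k, h⟩ := by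
        intro hcon
        exact hext (eq_of_heq (Sigma.ext_iff.mp hcon).2)
      exact congrFun (upd_of_ne π k h α k _ hne2) (a k)
    · exact congrFun (upd_of_ne π i h α k _ (fun hcon => hk (congrArg Sigma.fst hcon))) (a k)

omit [Fintype A] [DecidableEq O] [DecidableEq A] in
lemma prod_split (D : POMDP S A O n) (π : Policy O A n) (i : Fin n) (h : Hist O A i.val)
    (s : Fin n → S) (o : Fin n → O) (a : Fin n → A) (hext : ExtendsHist i h o a) :
    (∏ k : Fin n, D.Ω (s k) (o k) * (if k = i then 1 else π k (histOf o a k) (a k)))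
      = (∏ k : Fin (i.val + 1),
          D.Ω (s ⟨k.val, by have := k.isLt; have := i.isLt; omega⟩)
            (o ⟨k.val, by have := k.isLt; have := i.isLt; omega⟩)) * polC π i h *
        ∏ k ∈ univ.filter (fun k : Fin n => i < k),
          D.Ω (s k) (o k) * π k (histOf o a k) (a k) := by
  classical
  rw [← Finset.prod_filter_mul_prod_filter_not univ (fun k : Fin n => k.val ≤ i.val)
      (fun k : Fin n => D.Ω (s k) (o k) * (if k = i then 1 else π k (histOf o a k) (a k)))]
  have h2 : (∏ k ∈ univ.filter (fun k : Fin n => ¬ k.val ≤ i.val),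
        (D.Ω (s k) (o k) * (if k = i then 1 else π k (histOf o a k) (a k))))
      = ∏ k ∈ univ.filter (fun k : Fin n => i < k),
          D.Ω (s k) (o k) * π k (histOf o a k) (a k) := by
    have hset : univ.filter (fun k : Fin n => ¬ k.val ≤ i.val)
        = univ.filter (fun k : Fin n => i < k) := by
      apply Finset.filter_congr
      intro k _
      rw [Fin.lt_def]
      exact not_le
    rw [hset]
    apply Finset.prod_congr rfl
    intro k hk
    have hik : i < k := (mem_filter.mp hk).2
    rw [if_neg hik.ne']
  have h1 : (∏ k ∈ univ.filter (fun k : Fin n => k.val ≤ i.val),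
        (D.Ω (s k) (o k) * (if k = i then 1 else π k (histOf o a k) (a k))))
      = (∏ k : Fin (i.val + 1),
          D.Ω (s ⟨k.val, by have := k.isLt; have := i.isLt; omega⟩)
            (o ⟨k.val, by have := k.isLt; have := i.isLt; omega⟩)) * polC π i h := by
    rw [Finset.prod_mul_distrib]
    congr 1
    · refine Finset.prod_bij'
        (fun (k : Fin n) (hk : k ∈ univ.filter (fun k : Fin n => k.val ≤ i.val)) =>
          (⟨k.val, by have := (mem_filter.mp hk).2; omega⟩ : Fin (i.val + 1)))
        (fun (m : Fin (i.val + 1)) _ => (⟨m.val, by have := m.isLt; have := i.isLt; omega⟩ : Fin n))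
        ?_ ?_ ?_ ?_ ?_
      · intro k hk; exact mem_univ _
      · intro m _
        simp only [mem_filter, mem_univ, true_and]
        have := m.isLt; omega
      · intro k hk; rfl
      · intro m hm; rfl
      · intro k hk; rfl
    · have hins : univ.filter (fun k : Fin n => k.val ≤ i.val)
          = insert i (univ.filter (fun k : Fin n => k.val < i.val)) := by
        ext k
        simp only [mem_filter, mem_univ, true_and, Finset.mem_insert, Fin.ext_iff]
        omega
      rw [hins, Finset.prod_insert (by simp), if_pos rfl, one_mul]
      unfold polC
      refine Finset.prod_bij'
        (fun (k : Fin n) (hk : k ∈ univ.filter (fun k : Fin n => k.val < i.val)) =>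
          (⟨k.val, (mem_filter.mp hk).2⟩ : Fin i.val))
        (fun (m : Fin i.val) _ => (⟨m.val, by have := m.isLt; have := i.isLt; omega⟩ : Fin n))
        ?_ ?_ ?_ ?_ ?_
      · intro k hk; exact mem_univ _
      · intro m _
        simp only [mem_filter, mem_univ, true_and]
        exact m.isLt
      · intro k hk; rfl
      · intro m hm; rfl
      · intro k hk
        have hki : k.val < i.val := (mem_filter.mp hk).2
        have hne : k ≠ i := by
          intro hcon; rw [hcon] at hki; omega
        rw [if_neg hne, histOf_trunc hext k hki, hext.2 ⟨k.val, hki⟩]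
  rw [h1, h2]

lemma sum_ext (D : POMDP S A O n) (π : Policy O A n) (i : Fin n) (h : Hist O A i.val)
    (α : A → ℝ) :
    (∑ s : Fin n → S, ∑ o : Fin n → O, ∑ a : Fin n → A,
      if ExtendsHist i h o a then α (a i) * skipProb D π i s o a * D.U s else 0)
    = polC π i h * doVal D π i h α := by
  unfold doVal
  rw [Finset.mul_sum]
  apply Finset.sum_congr rfl; intro s _
  rw [Finset.mul_sum]
  apply Finset.sum_congr rfl; intro o _
  rw [Finset.mul_sum]
  apply Finset.sum_congr rfl; intro a _
  rw [mul_ite, mul_zero]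
  by_cases hext : ExtendsHist i h o a
  · rw [if_pos hext, if_pos hext]
    unfold skipProb
    rw [prod_split D π i h s o a hext]
    ring
  · rw [if_neg hext, if_neg hext]

lemma expUtil_upd (D : POMDP S A O n) (π : Policy O A n) (i : Fin n) (h : Hist O A i.val)
    (α : A → ℝ) :
    expUtil D (upd π i h α) =
      expUtil D π + polC π i h * (doVal D π i h α - doVal D π i h (π i h)) := by
  have key : ∀ β : A → ℝ, expUtil D (upd π i h β) =
      polC π i h * doVal D π i h β +
        ∑ s : Fin n → S, ∑ o : Fin n → O, ∑ a : Fin n → A,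
          (if ExtendsHist i h o a then 0 else trajProb D π s o a * D.U s) := by
    intro β
    unfold expUtil
    have hterm : ∀ (s : Fin n → S) (o : Fin n → O) (a : Fin n → A),
        trajProb D (upd π i h β) s o a * D.U s =
          (if ExtendsHist i h o a then β (a i) * skipProb D π i s o a * D.U s else 0)
          + (if ExtendsHist i h o a then 0 else trajProb D π s o a * D.U s) := by
      intro s o a
      rw [trajProb_upd]
      by_cases hext : histOf o a i = h
      · rw [if_pos hext, if_pos (extendsHist_iff.mpr hext), if_pos (extendsHist_iff.mpr hext)]
        ring
      · rw [if_neg hext, if_neg (fun hc => hext (extendsHist_iff.mp hc)),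
          if_neg (fun hc => hext (extendsHist_iff.mp hc))]
        ring
    simp only [hterm, Finset.sum_add_distrib]
    rw [sum_ext]
  have h2 := key (π i h)
  rw [upd_self] at h2
  rw [key α, h2]
  ring

omit [Fintype A] [Fintype O] [DecidableEq O] [DecidableEq A] [NeZero n] in
lemma histProb_eq_polC (D : POMDP S A O n) (π : Policy O A n) (i : Fin n)
    (h : Hist O A i.val) :
    histProb D π i h = polC π i h * doProb D i h := by
  unfold histProb doProb polC
  rw [Finset.mul_sum]
  exact Finset.sum_congr rfl fun s _ => by ring

lemma if_pm (P : Prop) [Decidable P] (α : A → ℝ) (x : A) (r u v w z : ℝ) :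
    (if P then r * u * α x * v * w * z else 0)
      = ∑ b : A, α b * (if P then r * u * pmass b x * v * w * z else 0) := by
  by_cases hP : P
  · simp only [if_pos hP]
    have hb : ∀ b : A, α b * (r * u * pmass b x * v * w * z)
        = if x = b then α b * (r * u * 1 * v * w * z) else 0 := by
      intro b
      unfold pmass
      by_cases hxb : x = b
      · rw [if_pos hxb, if_pos hxb]
      · rw [if_neg hxb, if_neg hxb]
        ring
    rw [Finset.sum_congr rfl fun b _ => hb b, Finset.sum_ite_eq univ x
      (fun b => α b * (r * u * 1 * v * w * z)), if_pos (mem_univ x)]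
    ring
  · simp [hP]

omit [Fintype S] [Fintype A] [Fintype O] [DecidableEq O] [DecidableEq A] [NeZero n] in
lemma sum_swap4 {γ1 γ2 γ3 γ4 : Type} [Fintype γ1] [Fintype γ2] [Fintype γ3] [Fintype γ4]
    (F : γ1 → γ2 → γ3 → γ4 → ℝ) :
    (∑ s : γ1, ∑ o : γ2, ∑ a : γ3, ∑ b : γ4, F s o a b)
      = ∑ b : γ4, ∑ s : γ1, ∑ o : γ2, ∑ a : γ3, F s o a b := by
  refine Eq.trans (Finset.sum_congr rfl fun s _ => ?_) Finset.sum_comm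
  refine Eq.trans (Finset.sum_congr rfl fun o _ => ?_) Finset.sum_comm
  exact Finset.sum_comm

lemma doVal_decomp (D : POMDP S A O n) (π : Policy O A n) (i : Fin n) (h : Hist O A i.val)
    (α : A → ℝ) :
    doVal D π i h α = ∑ b : A, α b * doVal D π i h (pmass b) := by
  unfold doVal
  calc (∑ s : Fin n → S, ∑ o : Fin n → O, ∑ a : Fin n → A,
        if ExtendsHist i h o a then
          D.μ (s 0) *
            (∏ k : Fin (i.val + 1),
              D.Ω (s ⟨k.val, by have := k.isLt; have := i.isLt; omega⟩)
                (o ⟨k.val, by have := k.isLt; have := i.isLt; omega⟩)) *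
            α (a i) *
            (∏ k ∈ univ.filter (fun k : Fin n => i < k),
              D.Ω (s k) (o k) * π k (histOf o a k) (a k)) *
            (∏ k : Fin (n - 1),
              D.T (s ⟨k.val, by have := k.isLt; omega⟩) (a ⟨k.val, by have := k.isLt; omega⟩)
                (s ⟨k.val + 1, by have := k.isLt; omega⟩)) *
            D.U s
        else 0)
      = ∑ s : Fin n → S, ∑ o : Fin n → O, ∑ a : Fin n → A, ∑ b : A,
          α b * (if ExtendsHist i h o a then
            D.μ (s 0) *
              (∏ k : Fin (i.val + 1),
                D.Ω (s ⟨k.val, by have := k.isLt; have := i.isLt; omega⟩)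
                  (o ⟨k.val, by have := k.isLt; have := i.isLt; omega⟩)) *
              pmass b (a i) *
              (∏ k ∈ univ.filter (fun k : Fin n => i < k),
                D.Ω (s k) (o k) * π k (histOf o a k) (a k)) *
              (∏ k : Fin (n - 1),
                D.T (s ⟨k.val, by have := k.isLt; omega⟩) (a ⟨k.val, by have := k.isLt; omega⟩)
                  (s ⟨k.val + 1, by have := k.isLt; omega⟩)) *
              D.U s
          else 0) := by
        refine Finset.sum_congr rfl fun s _ => Finset.sum_congr rfl fun o _ =>
          Finset.sum_congr rfl fun a _ => ?_
        exact if_pm _ α (a i) _ _ _ _ _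
    _ = ∑ b : A, ∑ s : Fin n → S, ∑ o : Fin n → O, ∑ a : Fin n → A,
          α b * (if ExtendsHist i h o a then
            D.μ (s 0) *
              (∏ k : Fin (i.val + 1),
                D.Ω (s ⟨k.val, by have := k.isLt; have := i.isLt; omega⟩)
                  (o ⟨k.val, by have := k.isLt; have := i.isLt; omega⟩)) *
              pmass b (a i) *
              (∏ k ∈ univ.filter (fun k : Fin n => i < k),
                D.Ω (s k) (o k) * π k (histOf o a k) (a k)) *
              (∏ k : Fin (n - 1),
                D.T (s ⟨k.val, by have := k.isLt; omega⟩) (a ⟨k.val, by have := k.isLt; omega⟩)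
                  (s ⟨k.val + 1, by have := k.isLt; omega⟩)) *
              D.U s
          else 0) := by
        exact sum_swap4 _
    _ = _ := by
        refine Finset.sum_congr rfl fun b _ => ?_
        simp only [← Finset.mul_sum]

lemma doVal_shift1 (D : POMDP S A O n) (π : Policy O A n) (i : Fin n) (h : Hist O A i.val)
    (c : ℝ) (f g : A → ℝ) :
    doVal D π i h (fun b => f b + c * (g b - f b))
      = doVal D π i h f + c * (doVal D π i h g - doVal D π i h f) := by
  rw [doVal_decomp D π i h (fun b => f b + c * (g b - f b)), doVal_decomp D π i h f,
    doVal_decomp D π i h g]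
  calc (∑ b : A, (f b + c * (g b - f b)) * doVal D π i h (pmass b))
      = ∑ b : A, (f b * doVal D π i h (pmass b)
          + c * (g b * doVal D π i h (pmass b) - f b * doVal D π i h (pmass b))) :=
        Finset.sum_congr rfl fun b _ => by ring
    _ = _ := by
        rw [Finset.sum_add_distrib, ← Finset.mul_sum, Finset.sum_sub_distrib]

lemma doVal_shift2 (D : POMDP S A O n) (π : Policy O A n) (i : Fin n) (h : Hist O A i.val)
    (c0 c1 : ℝ) (f g0 g1 : A → ℝ) :
    doVal D π i h (fun b => f b + c0 * (g0 b - f b) + c1 * (g1 b - f b))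
      = doVal D π i h f + c0 * (doVal D π i h g0 - doVal D π i h f)
        + c1 * (doVal D π i h g1 - doVal D π i h f) := by
  rw [doVal_decomp D π i h (fun b => f b + c0 * (g0 b - f b) + c1 * (g1 b - f b)),
    doVal_decomp D π i h f, doVal_decomp D π i h g0, doVal_decomp D π i h g1]
  calc (∑ b : A, (f b + c0 * (g0 b - f b) + c1 * (g1 b - f b)) * doVal D π i h (pmass b))
      = ∑ b : A, ((f b * doVal D π i h (pmass b)
          + c0 * (g0 b * doVal D π i h (pmass b) - f b * doVal D π i h (pmass b)))
          + c1 * (g1 b * doVal D π i h (pmass b) - f b * doVal D π i h (pmass b))) :=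
        Finset.sum_congr rfl fun b _ => by ring
    _ = _ := by
        rw [Finset.sum_add_distrib, Finset.sum_add_distrib, ← Finset.mul_sum, ← Finset.mul_sum,
          Finset.sum_sub_distrib, Finset.sum_sub_distrib]

lemma twoSlot (D : POMDP S A O n) (π : Policy O A n) (i0 i1 : Fin n)
    (h0 : Hist O A i0.val) (h1 : Hist O A i1.val)
    (hne : (⟨i0, h0⟩ : (k : Fin n) × Hist O A k.val) ≠ ⟨i1, h1⟩)
    (c0 c1 : ℝ) (b0 b1 : A) :
    expUtil D (upd (upd π i1 h1 (fun b => π i1 h1 b + c1 * (pmass b1 b - π i1 h1 b))) i0 h0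
        (fun b => π i0 h0 b + c0 * (pmass b0 b - π i0 h0 b)))
      = expUtil D π
        + c1 * (polC π i1 h1 * (doVal D π i1 h1 (pmass b1) - doVal D π i1 h1 (π i1 h1)))
        + c0 * (polC (upd π i1 h1 (fun b => π i1 h1 b + c1 * (pmass b1 b - π i1 h1 b))) i0 h0 *
            (doVal D (upd π i1 h1 (fun b => π i1 h1 b + c1 * (pmass b1 b - π i1 h1 b))) i0 h0
                (pmass b0)
              - doVal D (upd π i1 h1 (fun b => π i1 h1 b + c1 * (pmass b1 b - π i1 h1 b))) i0 h0
                (π i0 h0))) := by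
  rw [expUtil_upd D (upd π i1 h1 (fun b => π i1 h1 b + c1 * (pmass b1 b - π i1 h1 b))) i0 h0]
  rw [expUtil_upd D π i1 h1]
  rw [doVal_shift1 D π i1 h1 c1 (π i1 h1) (pmass b1)]
  rw [upd_of_ne π i1 h1 _ i0 h0 hne]
  rw [doVal_shift1 D (upd π i1 h1 (fun b => π i1 h1 b + c1 * (pmass b1 b - π i1 h1 b))) i0 h0
    c0 (π i0 h0) (pmass b0)]
  ring

lemma continuous_upd_apply (π : Policy O A n) (i1 : Fin n) (h1 : Hist O A i1.val)
    (β : ℝ → A → ℝ) (hβ : ∀ b, Continuous fun ε => β ε b) (j : Fin n) (h' : Hist O A j.val)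
    (b : A) : Continuous fun ε => upd π i1 h1 (β ε) j h' b := by
  unfold upd
  by_cases hc : (⟨j, h'⟩ : (k : Fin n) × Hist O A k.val) = ⟨i1, h1⟩
  · simp only [if_pos hc]
    exact hβ b
  · simp only [if_neg hc]
    exact continuous_const

lemma continuous_polC (i0 : Fin n) (h0 : Hist O A i0.val) (Pf : ℝ → Policy O A n)
    (hPf : ∀ (j : Fin n) (h' : Hist O A j.val) (b : A), Continuous fun ε => Pf ε j h' b) :
    Continuous fun ε => polC (Pf ε) i0 h0 := by
  unfold polC
  exact continuous_finset_prod _ fun k _ => hPf _ _ _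

lemma continuous_doVal (D : POMDP S A O n) (Pf : ℝ → Policy O A n)
    (hPf : ∀ (j : Fin n) (h' : Hist O A j.val) (b : A), Continuous fun ε => Pf ε j h' b)
    (i0 : Fin n) (h0 : Hist O A i0.val) (γ : A → ℝ) :
    Continuous fun ε => doVal D (Pf ε) i0 h0 γ := by
  unfold doVal
  apply continuous_finset_sum; intro s _
  apply continuous_finset_sum; intro o _
  apply continuous_finset_sum; intro a _
  by_cases hext : ExtendsHist i0 h0 o a
  · simp only [if_pos hext]
    refine ((((continuous_const.mul continuous_const).mul continuous_const).mul ?_).mul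
      continuous_const).mul continuous_const
    exact continuous_finset_prod _ fun k _ => continuous_const.mul (hPf _ _ _)
  · simp only [if_neg hext]
    exact continuous_const

omit [Fintype S] [Fintype A] [Fintype O] [DecidableEq O] [DecidableEq A] [NeZero n] in
lemma gordan2 {ι : Type} [Fintype ι] (v : ι → ℝ × ℝ)
    (H : ∀ t : ℝ, 0 ≤ t → t ≤ 1 → ∃ k, 0 < t * (v k).1 + (1 - t) * (v k).2) :
    ∃ k0 k1 : ι, ∃ l0 l1 : ℝ, 0 ≤ l0 ∧ 0 ≤ l1 ∧
      0 < l0 * (v k0).1 + l1 * (v k1).1 ∧ 0 < l0 * (v k0).2 + l1 * (v k1).2 := by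
  classical
  obtain ⟨τ1, hτ1'⟩ := H 1 zero_le_one le_rfl
  obtain ⟨τ0, hτ0'⟩ := H 0 le_rfl zero_le_one
  have hτ1 : 0 < (v τ1).1 := by linarith [hτ1']
  have hτ0 : 0 < (v τ0).2 := by linarith [hτ0']
  by_cases hA : ∃ σ, 0 < (v σ).1 ∧ 0 ≤ (v σ).2
  · obtain ⟨σ, hs1, hs2⟩ := hA
    refine ⟨σ, τ0, 2 * (|(v τ0).1| + 1), (v σ).1, by positivity, le_of_lt hs1, ?_, ?_⟩
    · have h1 : -|(v τ0).1| ≤ (v τ0).1 := neg_abs_le _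
      have h2 : 0 ≤ |(v τ0).1| := abs_nonneg _
      nlinarith
    · nlinarith [mul_pos hs1 hτ0,
        mul_nonneg (by positivity : (0:ℝ) ≤ 2 * (|(v τ0).1| + 1)) hs2]
  · by_cases hB : ∃ σ, 0 ≤ (v σ).1 ∧ 0 < (v σ).2
    · obtain ⟨σ, hs1, hs2⟩ := hB
      refine ⟨σ, τ1, 2 * (|(v τ1).2| + 1), (v σ).2, by positivity, le_of_lt hs2, ?_, ?_⟩
      · nlinarith [mul_pos hs2 hτ1,
          mul_nonneg (by positivity : (0:ℝ) ≤ 2 * (|(v τ1).2| + 1)) hs1]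
      · have h1 : -|(v τ1).2| ≤ (v τ1).2 := neg_abs_le _
        have h2 : 0 ≤ |(v τ1).2| := abs_nonneg _
        nlinarith
    · push_neg at hA hB
      obtain ⟨σ1, hσ1P, hmin⟩ := Finset.exists_min_image
        (univ.filter (fun σ => 0 < (v σ).1))
        (fun σ => -(v σ).2 / ((v σ).1 - (v σ).2))
        ⟨τ1, mem_filter.mpr ⟨mem_univ _, hτ1⟩⟩
      have ha1 : 0 < (v σ1).1 := (mem_filter.mp hσ1P).2
      have hb1 : (v σ1).2 < 0 := hA σ1 ha1
      have hden : 0 < (v σ1).1 - (v σ1).2 := by linarith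
      set t : ℝ := -(v σ1).2 / ((v σ1).1 - (v σ1).2) with ht
      have ht0 : 0 < t := div_pos (by linarith) hden
      have ht1 : t < 1 := (div_lt_one hden).mpr (by linarith)
      have hkey : t * (v σ1).1 + (1 - t) * (v σ1).2 = 0 := by
        have hc : t * ((v σ1).1 - (v σ1).2) = -(v σ1).2 :=
          div_mul_cancel₀ _ (ne_of_gt hden)
        linear_combination hc
      obtain ⟨σ0, hσ0⟩ := H t (le_of_lt ht0) (le_of_lt ht1)
      have ha0 : (v σ0).1 ≤ 0 := by
        by_contra hpos
        push_neg at hpos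
        have hb0' : (v σ0).2 < 0 := hA σ0 hpos
        have hden0 : 0 < (v σ0).1 - (v σ0).2 := by linarith
        have hle : t ≤ -(v σ0).2 / ((v σ0).1 - (v σ0).2) :=
          hmin σ0 (mem_filter.mpr ⟨mem_univ _, hpos⟩)
        have hle2 : t * ((v σ0).1 - (v σ0).2) ≤ -(v σ0).2 := (le_div_iff₀ hden0).mp hle
        nlinarith
      have hb0 : 0 < (v σ0).2 := by
        by_contra hb0n
        push_neg at hb0n
        nlinarith [mul_nonpos_of_nonneg_of_nonpos (le_of_lt ht0) ha0,
          mul_nonpos_of_nonneg_of_nonpos (by linarith : (0:ℝ) ≤ 1 - t) hb0n]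
      have hident : (1 - t) * ((v σ1).1 * (v σ0).2 - (v σ0).1 * (v σ1).2)
          = (v σ1).1 * (t * (v σ0).1 + (1 - t) * (v σ0).2) := by
        linear_combination (-(v σ0).1) * hkey
      have hD0pos : 0 < (v σ1).1 * (v σ0).2 - (v σ0).1 * (v σ1).2 := by
        have h2 : 0 < (1 - t) * ((v σ1).1 * (v σ0).2 - (v σ0).1 * (v σ1).2) := by
          rw [hident]; exact mul_pos ha1 hσ0
        by_contra hn
        push_neg at hn
        nlinarith
      have hb1ne : (0:ℝ) < 2 * -(v σ1).2 := by linarith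
      have hεpos : 0 < ((v σ1).1 * (v σ0).2 - (v σ0).1 * (v σ1).2) / (2 * -(v σ1).2) :=
        div_pos hD0pos hb1ne
      refine ⟨σ0, σ1, (v σ1).1,
        -(v σ0).1 + ((v σ1).1 * (v σ0).2 - (v σ0).1 * (v σ1).2) / (2 * -(v σ1).2),
        le_of_lt ha1, by linarith, ?_, ?_⟩
      · have he : (v σ1).1 * (v σ0).1
            + (-(v σ0).1 + ((v σ1).1 * (v σ0).2 - (v σ0).1 * (v σ1).2) / (2 * -(v σ1).2))
              * (v σ1).1
            = (((v σ1).1 * (v σ0).2 - (v σ0).1 * (v σ1).2) / (2 * -(v σ1).2)) * (v σ1).1 := by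
          ring
        rw [he]
        exact mul_pos hεpos ha1
      · have hεb : (((v σ1).1 * (v σ0).2 - (v σ0).1 * (v σ1).2) / (2 * -(v σ1).2)) * (v σ1).2
            = -(((v σ1).1 * (v σ0).2 - (v σ0).1 * (v σ1).2) / 2) := by
          have hne2 : (v σ1).2 ≠ 0 := ne_of_lt hb1
          field_simp
        have he : (v σ1).1 * (v σ0).2
            + (-(v σ0).1 + ((v σ1).1 * (v σ0).2 - (v σ0).1 * (v σ1).2) / (2 * -(v σ1).2))
              * (v σ1).2
            = ((v σ1).1 * (v σ0).2 - (v σ0).1 * (v σ1).2)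
              + (((v σ1).1 * (v σ0).2 - (v σ0).1 * (v σ1).2) / (2 * -(v σ1).2)) * (v σ1).2 := by
          ring
        rw [he, hεb]
        linarith

end ParetoHelpers

/-- Pareto-optimal control theorem, necessity: if a full-memory policy `π` is
Pareto-optimal for the compatible POMDPs `(D1, D2)`, then there exist weights
`w1, w2 ≥ 0` with `w1 + w2 = 1` such that at every time `i` and every history `hᵢ` with
`w1·P¹(hᵢ;π) + w2·P²(hᵢ;π) > 0`, the action distribution `πᵢ(−|hᵢ)` maximizes
`α ↦ w1·W_{D1}^π(α,hᵢ) + w2·W_{D2}^π(α,hᵢ)` over all action distributions `α`. -/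
theorem paretoOptimal_control_necessity
    {S1 S2 A O : Type} [Fintype S1] [Fintype S2] [Fintype A] [Fintype O]
    [DecidableEq O] [DecidableEq A]
    [Nonempty S1] [Nonempty S2] [Nonempty A] [Nonempty O] {n : ℕ} [NeZero n]
    (D1 : POMDP S1 A O n) (D2 : POMDP S2 A O n) (hD1 : D1.Valid) (hD2 : D2.Valid)
    (π : Policy O A n) (hπ : IsPolicy π) (hpar : ParetoOptimal D1 D2 π) :
    ∃ w1 w2 : ℝ, 0 ≤ w1 ∧ 0 ≤ w2 ∧ w1 + w2 = 1 ∧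
      ∀ (i : Fin n) (h : Hist O A i.val),
        0 < w1 * histProb D1 π i h + w2 * histProb D2 π i h →
        ∀ α : A → ℝ, IsDist α →
          w1 * doVal D1 π i h α + w2 * doVal D2 π i h α ≤
            w1 * doVal D1 π i h (π i h) + w2 * doVal D2 π i h (π i h) := by
  classical
  by_contra hc
  push_neg at hc
  have hGH : ∀ t : ℝ, 0 ≤ t → t ≤ 1 → ∃ σ : (k : Fin n) × (Hist O A k.val × A),
      0 < t * (polC π σ.1 σ.2.1 *
          (doVal D1 π σ.1 σ.2.1 (pmass σ.2.2) - doVal D1 π σ.1 σ.2.1 (π σ.1 σ.2.1)))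
        + (1 - t) * (polC π σ.1 σ.2.1 *
          (doVal D2 π σ.1 σ.2.1 (pmass σ.2.2) - doVal D2 π σ.1 σ.2.1 (π σ.1 σ.2.1))) := by
    intro t ht0 ht1
    obtain ⟨i, h, hpos, α, hαd, hαgt⟩ := hc t (1 - t) ht0 (by linarith) (by ring)
    have hC0 : 0 ≤ polC π i h := polC_nonneg π hπ i h
    have hCpos : 0 < polC π i h := by
      rcases hC0.lt_or_eq with h' | h'
      · exact h'
      · exfalso
        rw [histProb_eq_polC, histProb_eq_polC, ← h', zero_mul, zero_mul, mul_zero, mul_zero,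
          add_zero] at hpos
        exact lt_irrefl 0 hpos
    have hsum : (∑ b : A, α b * (t * doVal D1 π i h (π i h) + (1 - t) * doVal D2 π i h (π i h)))
        < ∑ b : A, α b * (t * doVal D1 π i h (pmass b) + (1 - t) * doVal D2 π i h (pmass b)) := by
      calc (∑ b : A, α b * (t * doVal D1 π i h (π i h) + (1 - t) * doVal D2 π i h (π i h)))
          = t * doVal D1 π i h (π i h) + (1 - t) * doVal D2 π i h (π i h) := by
            rw [← Finset.sum_mul, hαd.2, one_mul]
        _ < t * doVal D1 π i h α + (1 - t) * doVal D2 π i h α := hαgt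
        _ = ∑ b : A, α b * (t * doVal D1 π i h (pmass b)
              + (1 - t) * doVal D2 π i h (pmass b)) := by
            rw [doVal_decomp D1 π i h α, doVal_decomp D2 π i h α, Finset.mul_sum,
              Finset.mul_sum, ← Finset.sum_add_distrib]
            exact Finset.sum_congr rfl fun b _ => by ring
    have hex : ∃ b : A,
        α b * (t * doVal D1 π i h (π i h) + (1 - t) * doVal D2 π i h (π i h))
          < α b * (t * doVal D1 π i h (pmass b) + (1 - t) * doVal D2 π i h (pmass b)) := by
      by_contra hall
      push_neg at hall
      exact absurd (Finset.sum_le_sum fun b _ => hall b) (not_le.mpr hsum)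
    obtain ⟨b, hb⟩ := hex
    have hαb : 0 < α b := by
      rcases (hαd.1 b).lt_or_eq with h' | h'
      · exact h'
      · exfalso
        rw [← h', zero_mul, zero_mul] at hb
        exact lt_irrefl 0 hb
    have hbb := (mul_lt_mul_iff_right₀ hαb).mp hb
    refine ⟨⟨i, (h, b)⟩, ?_⟩
    show 0 < t * (polC π i h * (doVal D1 π i h (pmass b) - doVal D1 π i h (π i h)))
        + (1 - t) * (polC π i h * (doVal D2 π i h (pmass b) - doVal D2 π i h (π i h)))
    nlinarith [mul_pos hCpos (sub_pos.mpr hbb)]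
  obtain ⟨σ0, σ1, l0, l1, hl0, hl1, hcombo1, hcombo2⟩ := gordan2
    (fun σ : (k : Fin n) × (Hist O A k.val × A) =>
      (polC π σ.1 σ.2.1 *
          (doVal D1 π σ.1 σ.2.1 (pmass σ.2.2) - doVal D1 π σ.1 σ.2.1 (π σ.1 σ.2.1)),
       polC π σ.1 σ.2.1 *
          (doVal D2 π σ.1 σ.2.1 (pmass σ.2.2) - doVal D2 π σ.1 σ.2.1 (π σ.1 σ.2.1)))) hGH
  obtain ⟨i0, h0, b0⟩ := σ0
  obtain ⟨i1, h1, b1⟩ := σ1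
  have hc1' : 0 < l0 * (polC π i0 h0 *
        (doVal D1 π i0 h0 (pmass b0) - doVal D1 π i0 h0 (π i0 h0)))
      + l1 * (polC π i1 h1 *
        (doVal D1 π i1 h1 (pmass b1) - doVal D1 π i1 h1 (π i1 h1))) := hcombo1
  have hc2' : 0 < l0 * (polC π i0 h0 *
        (doVal D2 π i0 h0 (pmass b0) - doVal D2 π i0 h0 (π i0 h0)))
      + l1 * (polC π i1 h1 *
        (doVal D2 π i1 h1 (pmass b1) - doVal D2 π i1 h1 (π i1 h1))) := hcombo2
  by_cases hpp : (⟨i0, h0⟩ : (k : Fin n) × Hist O A k.val) = ⟨i1, h1⟩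
  · -- the two deviations are at the same time/history
    have hi : i0 = i1 := congrArg Sigma.fst hpp
    subst hi
    have hh : h0 = h1 := eq_of_heq (Sigma.ext_iff.mp hpp).2
    subst hh
    have hem0 : (0:ℝ) < 1 / (l0 + l1 + 1) := by positivity
    have hml0 : 0 ≤ 1 / (l0 + l1 + 1) * l0 := mul_nonneg (le_of_lt hem0) hl0
    have hml1 : 0 ≤ 1 / (l0 + l1 + 1) * l1 := mul_nonneg (le_of_lt hem0) hl1
    have hsum1 : 1 / (l0 + l1 + 1) * l0 + 1 / (l0 + l1 + 1) * l1 ≤ 1 := by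
      have he : 1 / (l0 + l1 + 1) * l0 + 1 / (l0 + l1 + 1) * l1
          = (l0 + l1) / (l0 + l1 + 1) := by ring
      rw [he, div_le_one (by positivity)]
      linarith
    have hγ : IsDist (fun b => π i0 h0 b
        + 1 / (l0 + l1 + 1) * l0 * (pmass b0 b - π i0 h0 b)
        + 1 / (l0 + l1 + 1) * l1 * (pmass b1 b - π i0 h0 b)) :=
      isDist_shift2 (π i0 h0) (hπ i0 h0) _ _ hml0 hml1 hsum1 b0 b1
    have hE1 : expUtil D1 (upd π i0 h0 (fun b => π i0 h0 b
          + 1 / (l0 + l1 + 1) * l0 * (pmass b0 b - π i0 h0 b)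
          + 1 / (l0 + l1 + 1) * l1 * (pmass b1 b - π i0 h0 b)))
        = expUtil D1 π + 1 / (l0 + l1 + 1) *
          (l0 * (polC π i0 h0 * (doVal D1 π i0 h0 (pmass b0) - doVal D1 π i0 h0 (π i0 h0)))
            + l1 * (polC π i0 h0 *
              (doVal D1 π i0 h0 (pmass b1) - doVal D1 π i0 h0 (π i0 h0)))) := by
      rw [expUtil_upd, doVal_shift2 D1 π i0 h0 (1 / (l0 + l1 + 1) * l0) (1 / (l0 + l1 + 1) * l1)
        (π i0 h0) (pmass b0) (pmass b1)]
      ring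
    have hE2 : expUtil D2 (upd π i0 h0 (fun b => π i0 h0 b
          + 1 / (l0 + l1 + 1) * l0 * (pmass b0 b - π i0 h0 b)
          + 1 / (l0 + l1 + 1) * l1 * (pmass b1 b - π i0 h0 b)))
        = expUtil D2 π + 1 / (l0 + l1 + 1) *
          (l0 * (polC π i0 h0 * (doVal D2 π i0 h0 (pmass b0) - doVal D2 π i0 h0 (π i0 h0)))
            + l1 * (polC π i0 h0 *
              (doVal D2 π i0 h0 (pmass b1) - doVal D2 π i0 h0 (π i0 h0)))) := by
      rw [expUtil_upd, doVal_shift2 D2 π i0 h0 (1 / (l0 + l1 + 1) * l0) (1 / (l0 + l1 + 1) * l1)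
        (π i0 h0) (pmass b0) (pmass b1)]
      ring
    have hgt1 : expUtil D1 (upd π i0 h0 (fun b => π i0 h0 b
          + 1 / (l0 + l1 + 1) * l0 * (pmass b0 b - π i0 h0 b)
          + 1 / (l0 + l1 + 1) * l1 * (pmass b1 b - π i0 h0 b))) > expUtil D1 π := by
      rw [hE1]
      linarith [mul_pos hem0 hc1']
    have hgt2 : expUtil D2 (upd π i0 h0 (fun b => π i0 h0 b
          + 1 / (l0 + l1 + 1) * l0 * (pmass b0 b - π i0 h0 b)
          + 1 / (l0 + l1 + 1) * l1 * (pmass b1 b - π i0 h0 b))) > expUtil D2 π := by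
      rw [hE2]
      linarith [mul_pos hem0 hc2']
    rcases (hpar _ (isPolicy_upd π i0 h0 _ hπ hγ)).1 hgt1 with hbad | hbad
    · linarith
    · linarith
  · -- the two deviations are at different times/histories
    set Pf : ℝ → Policy O A n := fun ε =>
      upd π i1 h1 (fun b => π i1 h1 b + ε * l1 * (pmass b1 b - π i1 h1 b)) with hPf
    set g1 : ℝ → ℝ := fun ε =>
      l1 * (polC π i1 h1 * (doVal D1 π i1 h1 (pmass b1) - doVal D1 π i1 h1 (π i1 h1)))
        + l0 * (polC (Pf ε) i0 h0 *
          (doVal D1 (Pf ε) i0 h0 (pmass b0) - doVal D1 (Pf ε) i0 h0 (π i0 h0))) with hg1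
    set g2 : ℝ → ℝ := fun ε =>
      l1 * (polC π i1 h1 * (doVal D2 π i1 h1 (pmass b1) - doVal D2 π i1 h1 (π i1 h1)))
        + l0 * (polC (Pf ε) i0 h0 *
          (doVal D2 (Pf ε) i0 h0 (pmass b0) - doVal D2 (Pf ε) i0 h0 (π i0 h0))) with hg2
    have hent : ∀ (j : Fin n) (h' : Hist O A j.val) (b : A),
        Continuous fun ε => Pf ε j h' b := by
      intro j h' b
      rw [hPf]
      exact continuous_upd_apply π i1 h1 _
        (fun b' => continuous_const.add
          ((continuous_id.mul continuous_const).mul continuous_const)) j h' b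
    have hkey1 : ∀ ε : ℝ, expUtil D1 (upd (Pf ε) i0 h0
          (fun b => π i0 h0 b + ε * l0 * (pmass b0 b - π i0 h0 b)))
        = expUtil D1 π + ε * g1 ε := by
      intro ε
      rw [hg1, hPf]
      dsimp only
      rw [twoSlot D1 π i0 i1 h0 h1 hpp (ε * l0) (ε * l1) b0 b1]
      ring
    have hkey2 : ∀ ε : ℝ, expUtil D2 (upd (Pf ε) i0 h0
          (fun b => π i0 h0 b + ε * l0 * (pmass b0 b - π i0 h0 b)))
        = expUtil D2 π + ε * g2 ε := by
      intro ε
      rw [hg2, hPf]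
      dsimp only
      rw [twoSlot D2 π i0 i1 h0 h1 hpp (ε * l0) (ε * l1) b0 b1]
      ring
    have hg1c : Continuous g1 := by
      rw [hg1]
      exact continuous_const.add (continuous_const.mul
        ((continuous_polC i0 h0 Pf hent).mul
          ((continuous_doVal D1 Pf hent i0 h0 (pmass b0)).sub
            (continuous_doVal D1 Pf hent i0 h0 (π i0 h0)))))
    have hg2c : Continuous g2 := by
      rw [hg2]
      exact continuous_const.add (continuous_const.mul
        ((continuous_polC i0 h0 Pf hent).mul
          ((continuous_doVal D2 Pf hent i0 h0 (pmass b0)).sub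
            (continuous_doVal D2 Pf hent i0 h0 (π i0 h0)))))
    have hPf0 : Pf 0 = π := by
      rw [hPf]
      dsimp only
      have h0eq : (fun b => π i1 h1 b + 0 * l1 * (pmass b1 b - π i1 h1 b)) = π i1 h1 := by
        funext b; ring
      rw [h0eq]
      exact upd_self π i1 h1
    have hg10 : 0 < g1 0 := by
      rw [hg1]
      dsimp only
      rw [hPf0]
      linarith
    have hg20 : 0 < g2 0 := by
      rw [hg2]
      dsimp only
      rw [hPf0]
      linarith
    have hminc : Continuous fun ε => min (g1 ε) (g2 ε) := hg1c.min hg2c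
    have hmin0 : 0 < min (g1 0) (g2 0) := lt_min hg10 hg20
    have hev : ∀ᶠ ε in nhds (0:ℝ), 0 < min (g1 ε) (g2 ε) :=
      (hminc.tendsto 0).eventually (eventually_gt_nhds hmin0)
    obtain ⟨δ, hδpos, hδ⟩ := Metric.eventually_nhds_iff.mp hev
    have hε0 : 0 < min (δ / 2) (1 / (l0 + l1 + 1)) := lt_min (by linarith) (by positivity)
    have hεlt : dist (min (δ / 2) (1 / (l0 + l1 + 1))) 0 < δ := by
      rw [Real.dist_eq, sub_zero, abs_of_pos hε0]
      calc min (δ / 2) (1 / (l0 + l1 + 1)) ≤ δ / 2 := min_le_left _ _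
        _ < δ := by linarith
    have hgs := hδ hεlt
    have hg1pos : 0 < g1 (min (δ / 2) (1 / (l0 + l1 + 1))) :=
      lt_of_lt_of_le hgs (min_le_left _ _)
    have hg2pos : 0 < g2 (min (δ / 2) (1 / (l0 + l1 + 1))) :=
      lt_of_lt_of_le hgs (min_le_right _ _)
    have hbnd : ∀ l : ℝ, 0 ≤ l → l ≤ l0 + l1 →
        0 ≤ min (δ / 2) (1 / (l0 + l1 + 1)) * l
          ∧ min (δ / 2) (1 / (l0 + l1 + 1)) * l ≤ 1 := by
      intro l hla hlb
      constructor
      · exact mul_nonneg (le_of_lt hε0) hla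
      · calc min (δ / 2) (1 / (l0 + l1 + 1)) * l ≤ (1 / (l0 + l1 + 1)) * l :=
            mul_le_mul_of_nonneg_right (min_le_right _ _) hla
          _ ≤ 1 := by
            rw [div_mul_eq_mul_div, one_mul, div_le_one (by positivity)]
            linarith
    have hpol : IsPolicy (upd (Pf (min (δ / 2) (1 / (l0 + l1 + 1)))) i0 h0
        (fun b => π i0 h0 b
          + min (δ / 2) (1 / (l0 + l1 + 1)) * l0 * (pmass b0 b - π i0 h0 b))) := by
      apply isPolicy_upd
      · rw [hPf]
        dsimp only
        exact isPolicy_upd π i1 h1 _ hπ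
          (isDist_shift (π i1 h1) (hπ i1 h1) _ (hbnd l1 hl1 (by linarith)).1
            (hbnd l1 hl1 (by linarith)).2 b1)
      · exact isDist_shift (π i0 h0) (hπ i0 h0) _ (hbnd l0 hl0 (by linarith)).1
          (hbnd l0 hl0 (by linarith)).2 b0
    have hgt1 : expUtil D1 (upd (Pf (min (δ / 2) (1 / (l0 + l1 + 1)))) i0 h0
        (fun b => π i0 h0 b
          + min (δ / 2) (1 / (l0 + l1 + 1)) * l0 * (pmass b0 b - π i0 h0 b)))
        > expUtil D1 π := by
      rw [hkey1]
      linarith [mul_pos hε0 hg1pos]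
    have hgt2 : expUtil D2 (upd (Pf (min (δ / 2) (1 / (l0 + l1 + 1)))) i0 h0
        (fun b => π i0 h0 b
          + min (δ / 2) (1 / (l0 + l1 + 1)) * l0 * (pmass b0 b - π i0 h0 b)))
        > expUtil D2 π := by
      rw [hkey2]
      linarith [mul_pos hε0 hg2pos]
    rcases (hpar _ hpol).1 hgt1 with hbad | hbad
    · linarith
    · linarith
end

section
/- (Proposition 1, impossibility of fixed-weight aggregation.) In the cake-betting example, for every r ∈ [0,1] and every r-naive policy π, either E¹[U¹;π] < 27 or E²[U²;π] < 27. In particular, no r-naive policy attains the expected-utility pair (27,27) achieved by the bet-settling policy π̂, so every r-naive policy is strictly worse than π̂ in expectation for at least one principal. -/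
/-- Observations in the cake-betting example: the color of the cake. -/
inductive CakeObs : Type
  | red
  | green
  deriving DecidableEq

instance : Fintype CakeObs :=
  ⟨{CakeObs.red, CakeObs.green}, fun x => by cases x <;> simp⟩

/-- Actions in the cake-betting example: `act1` = (all, none), `act2` = (half, half),
`act3` = (none, all). -/
inductive CakeAct : Type
  | act1
  | act2
  | act3
  deriving DecidableEq

instance : Fintype CakeAct :=
  ⟨{CakeAct.act1, CakeAct.act2, CakeAct.act3}, fun x => by cases x <;> simp⟩

open CakeObs CakeAct

/-- Alice's utility: 30 for the whole cake, 20 for half, 0 for none. -/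
noncomputable def U1 : CakeAct → ℝ
  | act1 => 30
  | act2 => 20
  | act3 => 0

/-- Bob's utility: 0 if Alice gets the whole cake, 20 for half, 30 for the whole cake. -/
noncomputable def U2 : CakeAct → ℝ
  | act1 => 0
  | act2 => 20
  | act3 => 30

/-- A (behavioral) policy: for each observed color, a real-valued weighting of actions. -/
def CakePolicy : Type := CakeObs → CakeAct → ℝ

/-- A distribution on cake actions: nonnegative weights summing to one. -/
def IsDistA (α : CakeAct → ℝ) : Prop := (∀ a, 0 ≤ α a) ∧ ∑ a, α a = 1

/-- A genuine policy assigns a probability distribution on actions to each observation. -/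
def IsCakePolicy (π : CakePolicy) : Prop := ∀ o, IsDistA (π o)

/-- Alice's expected utility: she believes red with probability 0.9, green with 0.1. -/
noncomputable def E1 (π : CakePolicy) : ℝ :=
  0.9 * (∑ a, π red a * U1 a) + 0.1 * (∑ a, π green a * U1 a)

/-- Bob's expected utility: he believes red with probability 0.1, green with 0.9. -/
noncomputable def E2 (π : CakePolicy) : ℝ :=
  0.1 * (∑ a, π red a * U2 a) + 0.9 * (∑ a, π green a * U2 a)

/-- The bet-settling policy `π̂`: give Alice everything if the cake is red, and Bob
everything if it is green. -/
noncomputable def pihat : CakePolicy := fun o a =>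
  match o with
  | red => if a = act1 then 1 else 0
  | green => if a = act3 then 1 else 0

/-- A policy is Pareto-optimal (in the cake example) if no policy improves one principal's
expected utility without strictly decreasing the other's. -/
def CakePareto (π : CakePolicy) : Prop :=
  ∀ π' : CakePolicy, IsCakePolicy π' →
    (E1 π' > E1 π → E1 π' < E1 π ∨ E2 π' < E2 π) ∧
    (E2 π' > E2 π → E1 π' < E1 π ∨ E2 π' < E2 π)

/-- A policy is `r`-naive if, for each observation, its action distribution maximizes the
fixed-weight aggregation `α ↦ r·Σ_a α(a)U¹(a) + (1−r)·Σ_a α(a)U²(a)` over all action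
distributions `α`. -/
def Naive (r : ℝ) (π : CakePolicy) : Prop :=
  IsCakePolicy π ∧ ∀ o : CakeObs, ∀ α : CakeAct → ℝ, IsDistA α →
    r * (∑ a, α a * U1 a) + (1 - r) * (∑ a, α a * U2 a) ≤
      r * (∑ a, π o a * U1 a) + (1 - r) * (∑ a, π o a * U2 a)


lemma cake_sumA (f : CakeAct → ℝ) : ∑ a, f a = f act1 + f act2 + f act3 := by
  show Finset.sum _ _ = _
  rw [show (Finset.univ : Finset CakeAct) = {act1, act2, act3} from rfl]
  simp [Finset.sum_insert]
  ring

/-- Proposition 1 (impossibility of fixed-weight aggregation): for every `r ∈ [0,1]` and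
every `r`-naive policy `π`, at least one principal gets expected utility strictly below 27;
in particular `π` is strictly worse than the bet-settling policy `π̂` (which achieves
`(27, 27)`) in expectation for at least one principal. -/
theorem naive_policy_suboptimal (r : ℝ) (hr0 : 0 ≤ r) (hr1 : r ≤ 1)
    (π : CakePolicy) (hπ : Naive r π) :
    (E1 π < 27 ∨ E2 π < 27) ∧ (E1 π < E1 pihat ∨ E2 π < E2 pihat) := by
  obtain ⟨hpol, hmax⟩ := hπ
  have d1 : IsDistA (fun a => if a = act1 then (1:ℝ) else 0) := by
    constructor
    · intro a; dsimp only; split <;> norm_num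
    · rw [cake_sumA]; simp
  have d2 : IsDistA (fun a => if a = act2 then (1:ℝ) else 0) := by
    constructor
    · intro a; dsimp only; split <;> norm_num
    · rw [cake_sumA]; simp
  have d3 : IsDistA (fun a => if a = act3 then (1:ℝ) else 0) := by
    constructor
    · intro a; dsimp only; split <;> norm_num
    · rw [cake_sumA]; simp
  have key : ∀ o : CakeObs, (r < 2/3 → π o act1 = 0) ∧ (2/3 ≤ r → π o act3 = 0) := by
    intro o
    obtain ⟨hnn, hs⟩ := hpol o
    rw [cake_sumA] at hs
    have hp := hnn act1
    have hq := hnn act2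
    have hsn := hnn act3
    have h1 := hmax o _ d1
    have h2 := hmax o _ d2
    have h3 := hmax o _ d3
    rw [cake_sumA, cake_sumA, cake_sumA, cake_sumA] at h1 h2 h3
    simp only [U1, U2, if_pos, if_neg, reduceCtorEq, ite_true, ite_false] at h1 h2 h3
    constructor
    · intro hlt
      rcases le_or_gt r (1/3) with h | h
      · nlinarith [mul_nonneg hp (show (0:ℝ) ≤ 20 - 60*r by linarith),
          mul_nonneg hq (show (0:ℝ) ≤ 10 - 30*r by linarith)]
      · nlinarith [mul_nonneg hp (show (0:ℝ) ≤ 20 - 30*r by linarith),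
          mul_nonneg hsn (show (0:ℝ) ≤ 30*r - 10 by linarith)]
    · intro hge
      nlinarith [mul_nonneg hq (show (0:ℝ) ≤ 30*r - 20 by linarith),
        mul_nonneg hsn (show (0:ℝ) ≤ 60*r - 30 by linarith)]
  have main : E1 π < 27 ∨ E2 π < 27 := by
    rcases lt_or_ge r (2/3) with h | h
    · left
      have hr := (key red).1 h
      have hg := (key green).1 h
      obtain ⟨hnr, hsr⟩ := hpol red
      obtain ⟨hng, hsg⟩ := hpol green
      rw [cake_sumA] at hsr hsg
      have := hnr act3; have := hng act3
      unfold E1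
      rw [cake_sumA, cake_sumA]
      simp only [U1]
      nlinarith [hnr act2, hng act2]
    · right
      have hr := (key red).2 h
      have hg := (key green).2 h
      obtain ⟨hnr, hsr⟩ := hpol red
      obtain ⟨hng, hsg⟩ := hpol green
      rw [cake_sumA] at hsr hsg
      have := hnr act1; have := hng act1
      unfold E2
      rw [cake_sumA, cake_sumA]
      simp only [U2]
      nlinarith [hnr act2, hng act2]
  refine ⟨main, ?_⟩
  have e1 : E1 pihat = 27 := by
    unfold E1 pihat
    rw [cake_sumA, cake_sumA]
    simp [U1]
    norm_num
  have e2 : E2 pihat = 27 := by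
    unfold E2 pihat
    rw [cake_sumA, cake_sumA]
    simp [U2]
    norm_num
  rw [e1, e2]
  exact main
end
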